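/- Let P be an infinite set of primes and let G = ⨁_{p∈P} ℤ/pℤ act on the circle S¹, equipped with its Haar probability measure, by T_g z = φ(g)·z, where φ((g_p)_{p∈P}) = ∏_{p∈P} e^{2πi g_p / p} (a finite product since g_p = 0 for all but finitely many p). Then every measurable F : S¹ → S¹ which is a phase polynomial of degree < m for some m ≥ 1 with respect to this action has the form F(z) = c · z^n for μ-a.e. z, for some constant c ∈ S¹ and some integer n; in particular every such F is a phase polynomial of degree < 2. -/

import Mathlib

open MeasureTheory
open scoped symmDiff

noncomputable instance : MeasurableSpace Circle := borel Circle
instance : BorelSpace Circle := ⟨rfl⟩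

/-- `φ : X → H` is a phase polynomial of degree `< k` with respect to the action `T` of `G`
on the measure space `(X, μ)`: all `k`-fold multiplicative derivatives
`Δ_{h₁} ⋯ Δ_{h_k} φ` equal `1` almost everywhere, where `Δ_g φ = (φ ∘ T_g) · φ⁻¹`. -/
def PhasePoly {G X H : Type*} [MeasurableSpace X] [CommGroup H]
    (T : G → X → X) (μ : Measure X) : ℕ → (X → H) → Prop
  | 0, φ => ∀ᵐ x ∂μ, φ x = 1
  | (k + 1), φ => ∀ g : G, PhasePoly T μ k (fun x => φ (T g x) * (φ x)⁻¹)

/-- The action `T` of `G` on `(X, μ)` is ergodic: every measurable set that is invariant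
modulo null sets under every `T g` has measure `0` or `1`. -/
def IsErgodicAction {G X : Type*} [MeasurableSpace X] (T : G → X → X)
    (μ : Measure X) : Prop :=
  ∀ A : Set X, MeasurableSet A → (∀ g : G, μ ((T g ⁻¹' A) ∆ A) = 0) → μ A = 0 ∨ μ A = 1


/-!
By induction on the degree, every derivative `Δ_g F` of a phase polynomial is a character
`c_g z ^ n_g`. Since `φ g` is a root of unity, composing the relation `F (φ g z) = c_g z ^ n_g F z`
along the finite orbit of `φ g` shows that `z ^ (N n_g)` is a.e. constant, so `n_g = 0` and `F` is
an eigenfunction of every rotation `φ g`. Rotating multiplies the `n`-th Fourier coefficient of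
`F` by `(φ g) ^ n`, so two nonzero coefficients `n ≠ n₀` would force `(φ g) ^ (n - n₀) = 1` for
all `g`; this fails because `φ` maps the `p`-th summand onto the `p`-th roots of unity for
infinitely many `p`. Hence `F` has a single nonzero Fourier coefficient, i.e. `F = c z ^ n`.
-/

open Real

namespace Circle

lemma measurable_coe : Measurable fun z : Circle => (z : ℂ) :=
  Continuous.measurable (by fun_prop)

noncomputable def addCircleEquiv : AddCircle (1 : ℝ) ≃ᵐ Circle :=
  (AddCircle.homeomorphCircle one_ne_zero).toMeasurableEquiv

@[simp]
lemma addCircleEquiv_apply (x : AddCircle (1 : ℝ)) :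
    addCircleEquiv x = AddCircle.toCircle x :=
  AddCircle.homeomorphCircle_apply one_ne_zero x

lemma fourier_eq_coe_zpow (n : ℤ) (x : AddCircle (1 : ℝ)) :
    fourier n x = (addCircleEquiv x : ℂ) ^ n := by
  simp [fourier_apply, AddCircle.toCircle_zsmul]

instance : (Measure.map addCircleEquiv AddCircle.haarAddCircle).IsMulLeftInvariant := by
  refine ⟨fun β => ?_⟩
  obtain ⟨t, rfl⟩ := addCircleEquiv.surjective β
  have hcomm : (addCircleEquiv t * ·) ∘ addCircleEquiv = addCircleEquiv ∘ (t + ·) := by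
    funext x
    simp [AddCircle.toCircle_add]
  rw [Measure.map_map (measurable_const_mul _) addCircleEquiv.measurable, hcomm,
    ← Measure.map_map addCircleEquiv.measurable (measurable_const_add t), map_add_left_eq_self]

noncomputable def fourierCoeff (μ : Measure Circle) (f : Circle → ℂ) (n : ℤ) : ℂ :=
  ∫ z, (z : ℂ) ^ (-n) * f z ∂μ

section LeftInvariant

variable (μ : Measure Circle) [μ.IsMulLeftInvariant]

lemma integral_coe_zpow_eq_zero {k : ℤ} (hk : k ≠ 0) : ∫ z, (z : ℂ) ^ k ∂μ = 0 := by
  -- rotating by `exp (π / k)` multiplies the integral by `-1`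
  have hβ : (Circle.exp (π / k) : ℂ) ^ k = -1 := by
    rw [← coe_zpow, ← exp_intCast_mul, mul_div_cancel₀ _ (Int.cast_ne_zero.mpr hk), coe_exp,
      Complex.exp_pi_mul_I]
  have h :=
    integral_mul_left_eq_self (μ := μ) (fun z : Circle => (z : ℂ) ^ k) (Circle.exp (π / k))
  simp only [coe_mul, mul_zpow, integral_const_mul, hβ] at h
  linear_combination -h / 2

lemma coe_zpow_mul_fourierCoeff_of_ae_comp_mul_eq {f : Circle → ℂ} {β : Circle} {c : ℂ}
    (h : ∀ᵐ z ∂μ, f (β * z) = c * f z) (n : ℤ) :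
    (β : ℂ) ^ n * fourierCoeff μ f n = c * fourierCoeff μ f n := by
  have hrot := integral_mul_left_eq_self (μ := μ) (fun z : Circle => (z : ℂ) ^ (-n) * f z) β
  have hae : ∀ᵐ z ∂μ, ((β * z : Circle) : ℂ) ^ (-n) * f (β * z)
      = ((β : ℂ) ^ (-n) * c) * ((z : ℂ) ^ (-n) * f z) :=
    h.mono fun z hz => by rw [hz, coe_mul, mul_zpow]; ring
  rw [integral_congr_ae hae, integral_const_mul] at hrot
  calc (β : ℂ) ^ n * fourierCoeff μ f n
      = (β : ℂ) ^ n * ((β : ℂ) ^ (-n) * c * fourierCoeff μ f n) := by rw [fourierCoeff, hrot]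
    _ = c * fourierCoeff μ f n := by
      rw [← mul_assoc, ← mul_assoc, ← zpow_add₀ (coe_ne_zero β), add_neg_cancel, zpow_zero,
        one_mul]

lemma exists_ae_comp_pow_mul_eq {F : Circle → Circle} {β c : Circle} {n : ℤ}
    (h : ∀ᵐ z ∂μ, F (β * z) = c * z ^ n * F z) (j : ℕ) :
    ∃ d : Circle, ∀ᵐ z ∂μ, F (β ^ j * z) = d * z ^ (j * n) * F z := by
  induction j with
  | zero => exact ⟨1, ae_of_all _ fun z => by simp⟩
  | succ j ih =>
    obtain ⟨d, hd⟩ := ih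
    refine ⟨d * β ^ (j * n) * c, ?_⟩
    filter_upwards [(eventually_mul_left_iff μ β).2 hd, h] with z h1 h2
    rw [pow_succ, mul_assoc, h1, h2, mul_zpow, Nat.cast_succ, add_one_mul, zpow_add]
    simp only [mul_comm, mul_left_comm, mul_assoc]

variable [IsProbabilityMeasure μ]

lemma eq_zero_of_ae_zpow_eq {k : ℤ} {w : Circle} (h : ∀ᵐ z ∂μ, z ^ k = w) : k = 0 := by
  by_contra hk
  have hint : ∫ z, (z : ℂ) ^ k ∂μ = w := by
    rw [integral_congr_ae (h.mono fun z hz => by rw [← coe_zpow, hz]), integral_const]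
    simp
  rw [integral_coe_zpow_eq_zero μ hk] at hint
  exact coe_ne_zero w hint.symm

lemma eq_zero_of_ae_comp_mul_eq_mul_zpow {F : Circle → Circle} {β c : Circle} {n : ℤ}
    (hβ : IsOfFinOrder β) (h : ∀ᵐ z ∂μ, F (β * z) = c * z ^ n * F z) : n = 0 := by
  obtain ⟨d, hd⟩ := exists_ae_comp_pow_mul_eq μ h (orderOf β)
  have hconst : ∀ᵐ z ∂μ, z ^ ((orderOf β : ℤ) * n) = d⁻¹ := hd.mono fun z hz => by
    rw [pow_orderOf_eq_one, one_mul, right_eq_mul] at hz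
    exact eq_inv_of_mul_eq_one_right hz
  simpa [hβ.orderOf_pos.ne'] using eq_zero_of_ae_zpow_eq μ hconst

end LeftInvariant

section Haar

variable (μ : Measure Circle) [μ.IsHaarMeasure] [IsProbabilityMeasure μ]

lemma measurePreserving_addCircleEquiv :
    MeasurePreserving addCircleEquiv AddCircle.haarAddCircle μ := by
  refine ⟨addCircleEquiv.measurable, ?_⟩
  have : IsProbabilityMeasure (Measure.map addCircleEquiv AddCircle.haarAddCircle) :=
    Measure.isProbabilityMeasure_map addCircleEquiv.measurable.aemeasurable
  have hsmul := Measure.isMulInvariant_eq_smul_of_compactSpace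
    (Measure.map addCircleEquiv AddCircle.haarAddCircle) μ
  have hone :
      Measure.haarScalarFactor (Measure.map addCircleEquiv AddCircle.haarAddCircle) μ = 1 := by
    simpa using (congrArg (· Set.univ) hsmul).symm
  rw [hsmul, hone, one_smul]

lemma fourierCoeff_comp_addCircleEquiv (f : Circle → ℂ) (n : ℤ) :
    _root_.fourierCoeff (f ∘ addCircleEquiv) n = fourierCoeff μ f n := by
  rw [_root_.fourierCoeff, fourierCoeff, ← (measurePreserving_addCircleEquiv μ).integral_comp']
  simp only [fourier_eq_coe_zpow, Function.comp_apply, smul_eq_mul]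

lemma ae_eq_fourierCoeff_mul_zpow {f : Circle → ℂ} (hf : MemLp f 2 μ) {n₀ : ℤ}
    (h : ∀ n ≠ n₀, fourierCoeff μ f n = 0) :
    ∀ᵐ z ∂μ, f z = fourierCoeff μ f n₀ * (z : ℂ) ^ n₀ := by
  set a := fourierCoeff μ f n₀
  have hmp := measurePreserving_addCircleEquiv μ
  have hg : MemLp (f ∘ addCircleEquiv) 2 AddCircle.haarAddCircle := hf.comp_measurePreserving hmp
  have hcoeff (n : ℤ) : _root_.fourierCoeff hg.toLp n = fourierCoeff μ f n := by
    rw [fourierCoeff_congr_ae hg.coeFn_toLp, fourierCoeff_comp_addCircleEquiv μ]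
  have hsum : HasSum (fun n => fourierCoeff μ f n • fourierLp 2 n) hg.toLp := by
    simpa only [hcoeff] using hasSum_fourier_series_L2 hg.toLp
  have hL : hg.toLp = a • fourierLp 2 n₀ :=
    hsum.unique (hasSum_single n₀ fun n hn => by rw [h n hn, zero_smul])
  have hae : ∀ᵐ x ∂AddCircle.haarAddCircle,
      f (addCircleEquiv x) = a * (addCircleEquiv x : ℂ) ^ n₀ := by
    filter_upwards [hg.coeFn_toLp, Lp.coeFn_smul a (fourierLp 2 n₀), coeFn_fourierLp 2 n₀]
      with x h1 h2 h3
    rw [← fourier_eq_coe_zpow, ← h3, ← smul_eq_mul, ← Pi.smul_apply, ← h2, ← hL]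
    exact h1.symm
  rw [← hmp.map_eq]
  exact addCircleEquiv.measurableEmbedding.ae_map_iff.mpr hae

lemma exists_ae_eq_mul_zpow_of_ae_comp_mul_eq {F : Circle → Circle} (hF : Measurable F)
    {Λ : Set Circle} (hΛ : ∀ k : ℤ, (∀ β ∈ Λ, β ^ k = 1) → k = 0)
    (heig : ∀ β ∈ Λ, ∃ c : Circle, ∀ᵐ z ∂μ, F (β * z) = c * F z) :
    ∃ (c : Circle) (n : ℤ), ∀ᵐ z ∂μ, F z = c * z ^ n := by
  set f : Circle → ℂ := fun z => F z
  have hf : MemLp f 2 μ :=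
    .of_bound (measurable_coe.comp hF).aestronglyMeasurable 1
      (ae_of_all _ fun z => (norm_coe (F z)).le)
  have hsupp : ∃ n₀, ∀ n ≠ n₀, fourierCoeff μ f n = 0 := by
    by_cases hex : ∃ n₀, fourierCoeff μ f n₀ ≠ 0
    · obtain ⟨n₀, hn₀⟩ := hex
      refine ⟨n₀, fun n hn => by_contra fun hfn => hn ?_⟩
      refine sub_eq_zero.1 (hΛ _ fun β hβ => ?_)
      obtain ⟨c, hc⟩ := heig β hβ
      have hcf : ∀ᵐ z ∂μ, f (β * z) = c * f z := hc.mono fun z hz => by simp [f, hz]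
      have e1 := mul_right_cancel₀ hfn (coe_zpow_mul_fourierCoeff_of_ae_comp_mul_eq μ hcf n)
      have e2 := mul_right_cancel₀ hn₀ (coe_zpow_mul_fourierCoeff_of_ae_comp_mul_eq μ hcf n₀)
      apply coe_injective
      rw [coe_zpow, zpow_sub₀ (coe_ne_zero β), e1, e2, div_self (coe_ne_zero c), coe_one]
    · push Not at hex
      exact ⟨0, fun n _ => hex n⟩
  obtain ⟨n₀, hn₀⟩ := hsupp
  have hae := ae_eq_fourierCoeff_mul_zpow μ hf hn₀
  obtain ⟨z₀, hz₀⟩ := hae.exists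
  let c : Circle := ⟨fourierCoeff μ f n₀,
    mem_sphere_zero_iff_norm.2 (by simpa [f, norm_coe] using (congrArg norm hz₀).symm)⟩
  exact ⟨c, n₀, hae.mono fun z hz => coe_injective hz⟩

end Haar

end Circle

lemma PhasePoly.congr_ae {G X H : Type*} [MeasurableSpace X] [CommGroup H] {T : G → X → X}
    {μ : Measure X} (hT : ∀ g, Measure.QuasiMeasurePreserving (T g) μ μ) {k : ℕ}
    {φ ψ : X → H} (hφ : PhasePoly T μ k φ) (h : φ =ᵐ[μ] ψ) : PhasePoly T μ k ψ := by
  induction k generalizing φ ψ with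
  | zero =>
    filter_upwards [hφ, h] with x h1 h2
    rwa [← h2]
  | succ k ih =>
    refine fun g => ih (hφ g) ?_
    filter_upwards [(hT g).ae_eq h, h] with x h1 h2
    simp only [Function.comp_apply] at h1
    rw [h1, h2]

lemma phasePoly_two_mul_zpow {G : Type*} (μ : Measure Circle) (ρ : G → Circle) (c : Circle)
    (n : ℤ) : PhasePoly (fun g z => ρ g * z) μ 2 (fun z => c * z ^ n) :=
  fun _ _ => ae_of_all _ fun _ => by simp only [mul_zpow]; group

theorem exists_ae_eq_mul_zpow_of_phasePoly {G : Type*} (μ : Measure Circle) [μ.IsHaarMeasure]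
    [IsProbabilityMeasure μ] {ρ : G → Circle} (hfin : ∀ g, IsOfFinOrder (ρ g))
    (hgen : ∀ k : ℤ, (∀ g, ρ g ^ k = 1) → k = 0) {m : ℕ} {F : Circle → Circle}
    (hF : Measurable F) (hpoly : PhasePoly (fun g z => ρ g * z) μ m F) :
    ∃ (c : Circle) (n : ℤ), ∀ᵐ z ∂μ, F z = c * z ^ n := by
  induction m generalizing F with
  | zero => exact ⟨1, 0, hpoly.mono fun z hz => by simp [hz]⟩
  | succ m ih =>
    refine Circle.exists_ae_eq_mul_zpow_of_ae_comp_mul_eq μ hF (Λ := Set.range ρ)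
      (fun k hk => hgen k fun g => hk _ ⟨g, rfl⟩) ?_
    rintro _ ⟨g, rfl⟩
    obtain ⟨c, n, hcn⟩ := ih (F := fun z => F (ρ g * z) * (F z)⁻¹)
      ((hF.comp (measurable_const_mul _)).mul hF.inv) (hpoly g)
    have hrot : ∀ᵐ z ∂μ, F (ρ g * z) = c * z ^ n * F z :=
      hcn.mono fun z hz => by rw [← hz, inv_mul_cancel_right]
    obtain rfl := Circle.eq_zero_of_ae_comp_mul_eq_mul_zpow μ (hfin g) hrot
    exact ⟨c, hrot.mono fun z hz => by rwa [zpow_zero, mul_one] at hz⟩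

lemma Circle.isOfFinOrder_exp_two_pi_mul_div (a b : ℕ) :
    IsOfFinOrder (Circle.exp (2 * π * ((a : ℝ) / (b : ℝ)))) := by
  rcases b.eq_zero_or_pos with rfl | hb
  · simp
  · refine isOfFinOrder_iff_pow_eq_one.2 ⟨b, hb, ?_⟩
    rw [← Circle.exp_natCast_mul, mul_left_comm, mul_div_cancel₀ _ (by positivity)]
    exact_mod_cast Circle.exp_two_pi_mul_int a

noncomputable def zmodRotation (P : Set ℕ) (g : Π₀ p : P, ZMod (p : ℕ)) : Circle :=
  ∏ p ∈ g.support, Circle.exp (2 * π * (((g p).val : ℝ) / ((p : ℕ) : ℝ)))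

lemma isOfFinOrder_zmodRotation (P : Set ℕ) (g : Π₀ p : P, ZMod (p : ℕ)) :
    IsOfFinOrder (zmodRotation P g) := by
  rw [← CommGroup.mem_torsion]
  exact Subgroup.prod_mem _ fun p _ =>
    (CommGroup.mem_torsion _).2 (Circle.isOfFinOrder_exp_two_pi_mul_div _ _)

lemma zmodRotation_single {P : Set ℕ} (p : P) [NeZero (p : ℕ)] (j : ZMod p) :
    zmodRotation P (DFinsupp.single p j) = ZMod.toCircle j := by
  rcases eq_or_ne j 0 with rfl | hj
  · simp [zmodRotation]
  · rw [zmodRotation, DFinsupp.support_single (i := p) hj, Finset.prod_singleton,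
      DFinsupp.single_eq_same, ZMod.toCircle_eq_circleExp]

lemma eq_zero_of_forall_zmodRotation_zpow_eq_one {P : Set ℕ} (hP : P.Infinite) {k : ℤ}
    (hk : ∀ g, zmodRotation P g ^ k = 1) : k = 0 := by
  obtain ⟨p, hpP, hkp⟩ := hP.exists_gt k.natAbs
  have : NeZero p := ⟨by omega⟩
  have hdvd : (p : ℤ) ∣ k := by
    rw [← ZMod.intCast_zmod_eq_zero_iff_dvd, ← ZMod.injective_toCircle.eq_iff,
      AddChar.map_zero_eq_one, ← zsmul_one, AddChar.map_zsmul_eq_zpow]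
    exact zmodRotation_single (P := P) ⟨p, hpP⟩ 1 ▸ hk _
  exact Int.eq_zero_of_dvd_of_natAbs_lt_natAbs hdvd (by simpa using hkp)

theorem phase_polynomials_on_circle_system_are_characters
    (P : Set ℕ) (hPinf : P.Infinite)
    (μ : Measure Circle) [μ.IsHaarMeasure] [IsProbabilityMeasure μ]
    (φ : (Π₀ p : P, ZMod (p : ℕ)) → Circle)
    (hφ : ∀ g, φ g =
      ∏ p ∈ g.support, Circle.exp (2 * Real.pi * (((g p).val : ℝ) / ((p : ℕ) : ℝ))))
    (T : (Π₀ p : P, ZMod (p : ℕ)) → Circle → Circle)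
    (hT : ∀ g z, T g z = φ g * z)
    (F : Circle → Circle) (hFmeas : Measurable F)
    (m : ℕ) (hFpoly : PhasePoly T μ m F) :
    (∃ (c : Circle) (n : ℤ), ∀ᵐ z ∂μ, F z = c * z ^ n) ∧ PhasePoly T μ 2 F := by
  obtain rfl : φ = zmodRotation P := funext hφ
  obtain rfl : T = fun g z => zmodRotation P g * z := funext₂ hT
  obtain ⟨c, n, hF⟩ := exists_ae_eq_mul_zpow_of_phasePoly μ (isOfFinOrder_zmodRotation P)
    (fun _ => eq_zero_of_forall_zmodRotation_zpow_eq_one hPinf) hFmeas hFpoly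
  have hrot g : Measure.QuasiMeasurePreserving (zmodRotation P g * ·) μ μ :=
    (measurePreserving_mul_left μ _).quasiMeasurePreserving
  exact ⟨⟨c, n, hF⟩,
    (phasePoly_two_mul_zpow μ _ c n).congr_ae hrot (hF.mono fun _ hz => hz.symm)⟩
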